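/- Let σ > 0 and for m ∈ ℝ define the Gaussian density φ_m(x) = (2π σ²)^{-1/2} exp(−(x−m)²/(2σ²)). Set f = φ_0, f_mix = (1/2)(φ_σ + φ_{−σ}), and f̄ = (1/2)(f + f_mix). Then for every x ∈ ℝ with |x| > (3/2)σ, one has f(x) < f̄(x). -/

import Mathlib

/-!
Shifting the mean of a Gaussian by `m` multiplies its density by `exp ((m x - m² / 2) / σ²)`,
so `f_mix = f · e^{-1/2} cosh (x / σ)`. Hence `f < f̄` exactly when `e^{-1/2} cosh (x / σ) > 1`,
which holds as soon as one of the two exponentials `e^{± x/σ - 1/2}` exceeds `2`,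
i.e. for `|x / σ| > 1/2 + log 2`; and `1/2 + log 2 < 3/2`.
-/

open Real

/-- One-dimensional Gaussian density with mean `m` and variance `σ²`. -/
noncomputable def gaussDensity1D (σ m x : ℝ) : ℝ :=
  (2 * π * σ ^ 2) ^ (-(1 : ℝ) / 2) * Real.exp (-(x - m) ^ 2 / (2 * σ ^ 2))

lemma gaussDensity1D_pos {σ : ℝ} (hσ : σ ≠ 0) (m x : ℝ) : 0 < gaussDensity1D σ m x :=
  mul_pos (rpow_pos_of_pos (by positivity) _) (exp_pos _)

lemma gaussDensity1D_eq_mul_exp (σ m x : ℝ) :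
    gaussDensity1D σ m x = gaussDensity1D σ 0 x * exp ((m * x - m ^ 2 / 2) / σ ^ 2) := by
  rw [gaussDensity1D, gaussDensity1D, mul_assoc _ (exp _), ← exp_add]
  congr 2
  ring

lemma two_lt_exp_sub_half_add_exp_neg_sub_half {t : ℝ} (ht : 1 / 2 + log 2 < |t|) :
    2 < exp (t - 1 / 2) + exp (-t - 1 / 2) := by
  have h_two : 2 < exp (|t| - 1 / 2) := by
    simpa only [exp_log two_pos] using exp_lt_exp.mpr (show log 2 < |t| - 1 / 2 by linarith)
  rcases abs_choice t with h | h <;> rw [h] at h_two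
  · linarith [exp_pos (-t - 1 / 2)]
  · linarith [exp_pos (t - 1 / 2)]

lemma gaussDensity1D_lt_mix {σ x : ℝ} (hσ : σ ≠ 0) (hx : 1 / 2 + log 2 < |x / σ|) :
    gaussDensity1D σ 0 x < 1 / 2 * (gaussDensity1D σ σ x + gaussDensity1D σ (-σ) x) := by
  have h_exponent (m : ℝ) (hm : m = σ ∨ m = -σ) :
      (m * x - m ^ 2 / 2) / σ ^ 2 = m / σ * (x / σ) - 1 / 2 := by
    rcases hm with rfl | rfl <;> field_simp
  rw [gaussDensity1D_eq_mul_exp σ σ, gaussDensity1D_eq_mul_exp σ (-σ),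
    h_exponent σ (.inl rfl), h_exponent (-σ) (.inr rfl), div_self hσ, neg_div, div_self hσ]
  have h_sum := two_lt_exp_sub_half_add_exp_neg_sub_half hx
  have h_pos := gaussDensity1D_pos hσ 0 x
  simp only [one_mul, neg_one_mul]
  nlinarith

theorem stmt_4 (σ : ℝ) (hσ : 0 < σ)
    (f fmix fbar : ℝ → ℝ)
    (hf : f = gaussDensity1D σ 0)
    (hfmix : fmix = fun x => (1 / 2) * (gaussDensity1D σ σ x + gaussDensity1D σ (-σ) x))
    (hfbar : fbar = fun x => (1 / 2) * (f x + fmix x)) :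
    ∀ x : ℝ, |x| > (3 / 2) * σ → f x < fbar x := by
  subst hf hfmix hfbar
  intro x hx
  have h_ratio : 1 / 2 + log 2 < |x / σ| := by
    rw [abs_div, abs_of_pos hσ, lt_div_iff₀ hσ]
    nlinarith [log_two_lt_d9]
  linarith [gaussDensity1D_lt_mix hσ.ne' h_ratio]
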